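/- arXiv:2410.18159 — 2 statements merged into one kernel-verified Lean document; each statement's English description precedes it below -/
import Mathlib

section
/- Let y be an n-dimensional mean-zero random vector with covariance Γ, and let P_r be the r×n matrix whose rows are orthonormal eigenvectors of Γ corresponding to its r largest eigenvalues. Then C = P_r' P_r y minimizes E‖y − A B y‖² over all n×r matrices A and r×n matrices B; i.e., principal components give the best rank-r linear approximation in mean square. -/
/- Auxiliary lemmas -/

lemma pca_sum_fin_lt_eq {n r : ℕ} (hr : r ≤ n) (f : Fin n → ℝ) :
    ∑ k : Fin n, (if (k : ℕ) < r then f k else 0) = ∑ i : Fin r, f (Fin.castLE hr i) := by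
  rw [← Finset.sum_filter]
  refine Finset.sum_bij' (fun k hk => (⟨(k : ℕ), by simpa using hk⟩ : Fin r))
    (fun i _ => Fin.castLE hr i) ?_ ?_ ?_ ?_ ?_ <;>
    simp [Fin.ext_iff]

/-- If `lam` is antitone and nonnegative, `0 ≤ c ≤ 1` with `∑ c ≤ r`, then
`∑ lam k * c k` is at most the sum of the `r` largest values of `lam`. -/
lemma pca_lemA {n r : ℕ} (hr : r ≤ n) (lam c : Fin n → ℝ) (hanti : Antitone lam)
    (hnn : ∀ k, 0 ≤ lam k) (hc0 : ∀ k, 0 ≤ c k) (hc1 : ∀ k, c k ≤ 1)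
    (hcs : ∑ k, c k ≤ (r : ℝ)) :
    ∑ k, lam k * c k ≤ ∑ i : Fin r, lam (Fin.castLE hr i) := by
  set t : ℝ := if h : r < n then lam ⟨r, h⟩ else 0 with ht
  have ht0 : 0 ≤ t := by
    rw [ht]; split <;> simp [hnn]
  have ht1 : ∀ k : Fin n, (k : ℕ) < r → t ≤ lam k := by
    intro k hk
    rw [ht]; split
    · exact hanti (by simp [Fin.le_def]; omega)
    · exact hnn k
  have ht2 : ∀ k : Fin n, r ≤ (k : ℕ) → lam k ≤ t := by
    intro k hk
    have hrn : r < n := lt_of_le_of_lt hk k.isLt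
    rw [ht, dif_pos hrn]
    exact hanti (by simp [Fin.le_def]; omega)
  have key : ∑ k, (lam k - t) * c k ≤ ∑ k : Fin n, (if (k : ℕ) < r then lam k - t else 0) := by
    apply Finset.sum_le_sum
    intro k _
    by_cases hk : (k : ℕ) < r
    · simp only [hk, if_true]
      nlinarith [ht1 k hk, hc0 k, hc1 k]
    · simp only [hk, if_false]
      nlinarith [ht2 k (le_of_not_gt hk), hc0 k]
  have h2 : ∑ k : Fin n, (if (k : ℕ) < r then lam k - t else 0)
      = ∑ i : Fin r, lam (Fin.castLE hr i) - r * t := by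
    rw [pca_sum_fin_lt_eq hr (fun k => lam k - t), Finset.sum_sub_distrib, Finset.sum_const,
        Finset.card_univ, Fintype.card_fin, nsmul_eq_mul]
  have h3 : ∑ k, lam k * c k = ∑ k, (lam k - t) * c k + t * ∑ k, c k := by
    rw [Finset.mul_sum, ← Finset.sum_add_distrib]
    apply Finset.sum_congr rfl; intros; ring
  have h4 : t * ∑ k, c k ≤ t * r := mul_le_mul_of_nonneg_left hcs ht0
  linarith

/-- The orthogonal projection bound: the squared distance from `x` to any linear
combination of an orthonormal family is at least `‖x‖² - ∑ ⟪x, E a⟫²`. -/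
lemma pca_lemB {H : Type*} [NormedAddCommGroup H] [InnerProductSpace ℝ H] {d : ℕ}
    {E : Fin d → H} (hE : Orthonormal ℝ E) (x : H) (t : Fin d → ℝ) :
    ‖x‖ ^ 2 - ∑ a, (inner ℝ x (E a) : ℝ) ^ 2 ≤ ‖x - ∑ a, t a • E a‖ ^ 2 := by
  have hc : ‖∑ a, t a • E a‖ ^ 2 = ∑ a, (t a) ^ 2 := by
    rw [← real_inner_self_eq_norm_sq, hE.inner_sum]
    simp [sq]
  have h1 : ‖x - ∑ a, t a • E a‖ ^ 2
      = ‖x‖ ^ 2 - 2 * ∑ a, t a * (inner ℝ x (E a) : ℝ) + ∑ a, (t a) ^ 2 := by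
    rw [norm_sub_sq_real, hc, inner_sum]
    simp [real_inner_smul_right, mul_comm]
  have h2 : (0:ℝ) ≤ ∑ a, (t a - (inner ℝ x (E a) : ℝ)) ^ 2 :=
    Finset.sum_nonneg fun a _ => sq_nonneg _
  have h3 : ∑ a, (t a - (inner ℝ x (E a) : ℝ)) ^ 2
      = ∑ a, (t a) ^ 2 - 2 * ∑ a, t a * (inner ℝ x (E a) : ℝ)
        + ∑ a, (inner ℝ x (E a) : ℝ) ^ 2 := by
    have he : ∀ a : Fin d, (t a - (inner ℝ x (E a) : ℝ)) ^ 2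
        = ((t a) ^ 2 + (inner ℝ x (E a) : ℝ) ^ 2) - 2 * (t a * (inner ℝ x (E a) : ℝ)) :=
      fun a => by ring
    simp_rw [he]
    rw [Finset.sum_sub_distrib, Finset.sum_add_distrib, ← Finset.mul_sum]
    ring
  linarith

noncomputable def mu1 {𝕜 : Type*} [RCLike 𝕜] {ι : Type*} [Fintype ι] [DecidableEq ι]
    (A : Matrix ι ι 𝕜) (hA : A.IsHermitian) : ℝ := ⨆ i, hA.eigenvalues i

noncomputable def muD {𝕜 : Type*} [RCLike 𝕜] {n : ℕ}
    (A : Matrix (Fin n) (Fin n) 𝕜) (hA : A.IsHermitian) (i : Fin n) : ℝ :=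
  hA.eigenvalues (Tuple.sort hA.eigenvalues i.rev)

/-- Principal components give the best rank-r linear approximation in mean square: if
the rows of P are orthonormal eigenvectors of the covariance Γ of y for its r largest
eigenvalues, then C = PᵀP y minimizes E‖y - A B y‖² over all n×r A and r×n B. -/
theorem stmt14 {H : Type*} [NormedAddCommGroup H] [InnerProductSpace ℝ H]
    {n r : ℕ} (hr : r ≤ n) (y : Fin n → H)
    (Γ : Matrix (Fin n) (Fin n) ℝ)
    (hΓdef : ∀ i j, Γ i j = (inner ℝ (y i) (y j) : ℝ))
    (hΓ : Γ.IsHermitian)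
    (P : Matrix (Fin r) (Fin n) ℝ)
    (hortho : P * P.transpose = 1)
    (heig : ∀ i : Fin r,
      Γ.mulVec (fun j => P i j) = (muD Γ hΓ (Fin.castLE hr i)) • (fun j => P i j)) :
    ∀ (A : Matrix (Fin n) (Fin r) ℝ) (B : Matrix (Fin r) (Fin n) ℝ),
      ∑ i, ‖y i - ∑ j, (P.transpose * P) i j • y j‖ ^ 2
        ≤ ∑ i, ‖y i - ∑ j, (A * B) i j • y j‖ ^ 2 := by
  classical
  intro A B
  -- eigenvalue/eigenvector setup
  set μ : Fin n → ℝ := hΓ.eigenvalues with hμdef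
  set u : Fin n → (EuclideanSpace ℝ (Fin n)) := fun k => hΓ.eigenvectorBasis k with hudef
  set w : Fin n → H := fun k => ∑ i, u k i • y i with hwdef
  have huu : ∀ k l, ∑ i, u k i * u l i = if k = l then (1:ℝ) else 0 := by
    intro k l
    have h := orthonormal_iff_ite.mp hΓ.eigenvectorBasis.orthonormal k l
    simpa [PiLp.inner_apply, RCLike.inner_apply, hudef, mul_comm] using h
  have hmv : ∀ (l : Fin n) (i : Fin n), ∑ j, Γ i j * u l j = μ l * u l i := by
    intro l i
    have h := congrFun (hΓ.mulVec_eigenvectorBasis l) i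
    simpa [Matrix.mulVec, dotProduct, hudef, hμdef] using h
  have hxw : ∀ (x : H) (l : Fin n), (inner ℝ x (w l) : ℝ) = ∑ j, u l j * (inner ℝ x (y j) : ℝ) := by
    intro x l
    rw [hwdef]
    simp only [inner_sum, real_inner_smul_right]
  have hwy : ∀ (k : Fin n) (j : Fin n), (inner ℝ (w k) (y j) : ℝ) = μ k * u k j := by
    intro k j
    rw [real_inner_comm, hxw (y j) k, ← hmv k j]
    exact Finset.sum_congr rfl fun i _ => by rw [hΓdef]; ring
  have hww : ∀ k l, (inner ℝ (w k) (w l) : ℝ) = if k = l then μ k else 0 := by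
    intro k l
    rw [hxw (w k) l]
    simp_rw [hwy]
    have : ∑ j, u l j * (μ k * u k j) = μ k * ∑ i, u l i * u k i := by
      rw [Finset.mul_sum]; exact Finset.sum_congr rfl fun j _ => by ring
    rw [this, huu l k]
    by_cases h : k = l <;> simp [h, eq_comm]
  have hμnn : ∀ k, 0 ≤ μ k := by
    intro k
    have h := hww k k
    simp only [if_pos] at h
    rw [← h]
    exact real_inner_self_nonneg
  set lam : Fin r → ℝ := fun b => muD Γ hΓ (Fin.castLE hr b) with hlam
  set Q : Matrix (Fin n) (Fin n) ℝ := P.transpose * P with hQdef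
  have hQ : ∀ i j, Q i j = ∑ b, P b i * P b j := by
    intro i j; rw [hQdef]; simp [Matrix.mul_apply, Matrix.transpose_apply]
  have hPP : ∀ b c : Fin r, ∑ i, P b i * P c i = if b = c then (1:ℝ) else 0 := by
    intro b c
    have h := congrFun (congrFun hortho b) c
    simpa [Matrix.mul_apply, Matrix.transpose_apply, Matrix.one_apply] using h
  have hPeig : ∀ (b : Fin r) (j : Fin n), ∑ l, Γ j l * P b l = lam b * P b j := by
    intro b j
    have h := congrFun (heig b) j
    simpa [Matrix.mulVec, dotProduct] using h
  have hGsymm : ∀ i j, Γ i j = Γ j i := by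
    intro i j; rw [hΓdef, hΓdef, real_inner_comm]
  -- the left-hand side equals trace minus the top-r eigenvalue sum
  have hexp : ∀ i, ‖y i - ∑ j, Q i j • y j‖ ^ 2
      = Γ i i - 2 * ∑ j, Q i j * Γ i j + ∑ j, ∑ l, Q i j * Q i l * Γ j l := by
    intro i
    rw [norm_sub_sq_real]
    have h1 : ‖y i‖ ^ 2 = Γ i i := by rw [hΓdef, real_inner_self_eq_norm_sq]
    have h2 : (inner ℝ (y i) (∑ j, Q i j • y j) : ℝ) = ∑ j, Q i j * Γ i j := by
      simp only [inner_sum, real_inner_smul_right]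
      exact Finset.sum_congr rfl fun j _ => by rw [hΓdef]
    have h3 : ‖∑ j, Q i j • y j‖ ^ 2 = ∑ j, ∑ l, Q i j * Q i l * Γ j l := by
      rw [← real_inner_self_eq_norm_sq]
      simp only [sum_inner, inner_sum, real_inner_smul_left, real_inner_smul_right]
      refine Finset.sum_congr rfl fun j _ => ?_
      exact Finset.sum_congr rfl fun l _ => by rw [hGsymm j l, hΓdef l j]; ring
    rw [h1, h2, h3]
  have hT2 : ∑ i, ∑ j, Q i j * Γ i j = ∑ b, lam b := by
    calc ∑ i, ∑ j, Q i j * Γ i j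
        = ∑ i, ∑ b, ∑ j, P b i * P b j * Γ i j := by
          refine Finset.sum_congr rfl fun i _ => ?_
          have : ∀ j, Q i j * Γ i j = ∑ b, P b i * P b j * Γ i j := fun j => by
            rw [hQ, Finset.sum_mul]
          simp_rw [this]
          exact Finset.sum_comm
      _ = ∑ b, ∑ i, ∑ j, P b i * P b j * Γ i j := Finset.sum_comm
      _ = ∑ b, lam b := by
          refine Finset.sum_congr rfl fun b _ => ?_
          have e2 : ∀ i, ∑ j, P b i * P b j * Γ i j = lam b * (P b i * P b i) := by
            intro i
            calc ∑ j, P b i * P b j * Γ i j = (∑ j, Γ i j * P b j) * P b i := by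
                  rw [Finset.sum_mul]
                  exact Finset.sum_congr rfl fun j _ => by ring
              _ = lam b * (P b i * P b i) := by rw [hPeig b i]; ring
          simp_rw [e2]
          rw [← Finset.mul_sum, hPP b b, if_pos rfl, mul_one]
  have hQP : ∀ (i : Fin n) (c : Fin r), ∑ j, Q i j * P c j = P c i := by
    intro i c
    have : ∀ j, Q i j * P c j = ∑ b, P b i * P b j * P c j := fun j => by
      rw [hQ, Finset.sum_mul]
    simp_rw [this]
    rw [Finset.sum_comm]
    have e : ∀ b : Fin r, ∑ j, P b i * P b j * P c j = P b i * (if b = c then (1:ℝ) else 0) := by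
      intro b
      rw [← hPP b c, Finset.mul_sum]
      exact Finset.sum_congr rfl fun j _ => by ring
    simp_rw [e]
    simp
  have inner3 : ∀ i j, ∑ l, Q i l * Γ j l = ∑ c, P c i * (lam c * P c j) := by
    intro i j
    have : ∀ l, Q i l * Γ j l = ∑ c, P c i * P c l * Γ j l := fun l => by
      rw [hQ, Finset.sum_mul]
    simp_rw [this]
    rw [Finset.sum_comm]
    refine Finset.sum_congr rfl fun c _ => ?_
    calc ∑ l, P c i * P c l * Γ j l = (∑ l, Γ j l * P c l) * P c i := by
          rw [Finset.sum_mul]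
          exact Finset.sum_congr rfl fun l _ => by ring
      _ = P c i * (lam c * P c j) := by rw [hPeig c j]; ring
  have hT3 : ∑ i, ∑ j, ∑ l, Q i j * Q i l * Γ j l = ∑ b, lam b := by
    calc ∑ i, ∑ j, ∑ l, Q i j * Q i l * Γ j l
        = ∑ i, ∑ j, ∑ c, Q i j * (P c i * (lam c * P c j)) := by
          refine Finset.sum_congr rfl fun i _ => Finset.sum_congr rfl fun j _ => ?_
          calc ∑ l, Q i j * Q i l * Γ j l = Q i j * ∑ l, Q i l * Γ j l := by
                rw [Finset.mul_sum]
                exact Finset.sum_congr rfl fun l _ => by ring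
            _ = ∑ c, Q i j * (P c i * (lam c * P c j)) := by
                rw [inner3 i j, Finset.mul_sum]
      _ = ∑ i, ∑ c, ∑ j, Q i j * (P c i * (lam c * P c j)) :=
          Finset.sum_congr rfl fun i _ => Finset.sum_comm
      _ = ∑ c, ∑ i, ∑ j, Q i j * (P c i * (lam c * P c j)) := Finset.sum_comm
      _ = ∑ c, lam c := by
          refine Finset.sum_congr rfl fun c _ => ?_
          have e : ∀ i, ∑ j, Q i j * (P c i * (lam c * P c j))
              = lam c * (P c i * P c i) := by
            intro i
            calc ∑ j, Q i j * (P c i * (lam c * P c j))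
                = lam c * P c i * ∑ j, Q i j * P c j := by
                  rw [Finset.mul_sum]
                  exact Finset.sum_congr rfl fun j _ => by ring
              _ = lam c * (P c i * P c i) := by rw [hQP i c]; ring
          simp_rw [e]
          rw [← Finset.mul_sum, hPP c c, if_pos rfl, mul_one]
  have hLHS : ∑ i, ‖y i - ∑ j, Q i j • y j‖ ^ 2 = ∑ i, Γ i i - ∑ b, lam b := by
    simp_rw [hexp]
    rw [Finset.sum_add_distrib, Finset.sum_sub_distrib, ← Finset.mul_sum, hT2, hT3]
    ring
  -- subspace spanned by the rows of B applied to y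
  set z : Fin r → H := fun b => ∑ j, B b j • y j with hzdef
  set W : Submodule ℝ H := Submodule.span ℝ (Set.range z) with hWdef
  haveI : FiniteDimensional ℝ W := FiniteDimensional.span_of_finite ℝ (Set.finite_range z)
  set d : ℕ := Module.finrank ℝ W with hddef
  have hd : d ≤ r := by
    have := finrank_range_le_card (R := ℝ) z
    simpa [Set.finrank, hWdef, hddef] using this
  set e : OrthonormalBasis (Fin d) ℝ W := stdOrthonormalBasis ℝ W with hedef
  set E : Fin d → H := fun a => (e a : H) with hEdef
  have hE : Orthonormal ℝ E := by
    rw [orthonormal_iff_ite]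
    intro a b
    have h := orthonormal_iff_ite.mp e.orthonormal a b
    rw [hEdef]
    simpa [Submodule.coe_inner] using h
  have hcW : ∀ i, (∑ j, (A * B) i j • y j) ∈ W := by
    intro i
    have hc : ∑ j, (A * B) i j • y j = ∑ b, A i b • z b := by
      calc ∑ j, (A * B) i j • y j = ∑ j, ∑ b, (A i b * B b j) • y j := by
            refine Finset.sum_congr rfl fun j _ => ?_
            rw [Matrix.mul_apply, Finset.sum_smul]
        _ = ∑ b, ∑ j, (A i b * B b j) • y j := Finset.sum_comm
        _ = ∑ b, A i b • z b := by
            refine Finset.sum_congr rfl fun b _ => ?_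
            rw [hzdef]
            simp [Finset.smul_sum, smul_smul]
    rw [hc]
    exact Submodule.sum_mem _ fun b _ =>
      Submodule.smul_mem _ _ (Submodule.subset_span (Set.mem_range_self b))
  have hrep : ∀ i, ∃ t : Fin d → ℝ, ∑ j, (A * B) i j • y j = ∑ a, t a • E a := by
    intro i
    refine ⟨fun a => e.repr ⟨∑ j, (A * B) i j • y j, hcW i⟩ a, ?_⟩
    have h := congrArg (Subtype.val) (e.sum_repr ⟨∑ j, (A * B) i j • y j, hcW i⟩)
    have h2 : ((∑ a : Fin d, e.repr ⟨∑ j, (A * B) i j • y j, hcW i⟩ a • e a : W) : H)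
        = ∑ a : Fin d, e.repr ⟨∑ j, (A * B) i j • y j, hcW i⟩ a • E a := by
      push_cast
      simp [hEdef]
    exact h.symm.trans h2
  -- per-term lower bound for the right-hand side
  have hRHS1 : ∀ i, Γ i i - ∑ a, (inner ℝ (y i) (E a) : ℝ) ^ 2
      ≤ ‖y i - ∑ j, (A * B) i j • y j‖ ^ 2 := by
    intro i
    obtain ⟨t, ht⟩ := hrep i
    rw [ht]
    have := pca_lemB hE (y i) t
    have hyi : ‖y i‖ ^ 2 = Γ i i := by rw [hΓdef, real_inner_self_eq_norm_sq]
    linarith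
  have hRHS : ∑ i, Γ i i - ∑ i, ∑ a, (inner ℝ (y i) (E a) : ℝ) ^ 2
      ≤ ∑ i, ‖y i - ∑ j, (A * B) i j • y j‖ ^ 2 := by
    rw [← Finset.sum_sub_distrib]
    exact Finset.sum_le_sum fun i _ => hRHS1 i
  -- Parseval: rewrite the projection mass in terms of the w's
  have hswap : ∑ i, ∑ a, (inner ℝ (y i) (E a) : ℝ) ^ 2
      = ∑ k, ∑ a, (inner ℝ (w k) (E a) : ℝ) ^ 2 := by
    rw [Finset.sum_comm]
    rw [show ∑ k, ∑ a, (inner ℝ (w k) (E a) : ℝ) ^ 2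
        = ∑ a, ∑ k, (inner ℝ (w k) (E a) : ℝ) ^ 2 from Finset.sum_comm]
    refine Finset.sum_congr rfl fun a _ => ?_
    set v : EuclideanSpace ℝ (Fin n) := WithLp.toLp 2 (fun i => (inner ℝ (y i) (E a) : ℝ)) with hv
    have h1 : ∑ i, (inner ℝ (y i) (E a) : ℝ) ^ 2 = (inner ℝ v v : ℝ) := by
      rw [PiLp.inner_apply]
      exact Finset.sum_congr rfl fun i _ => by
        simp [RCLike.inner_apply, sq, hv]
    have h2 : (inner ℝ v v : ℝ) = ∑ k, (inner ℝ v (hΓ.eigenvectorBasis k) : ℝ)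
        * (inner ℝ (hΓ.eigenvectorBasis k) v : ℝ) :=
      (hΓ.eigenvectorBasis.sum_inner_mul_inner v v).symm
    have h3 : ∀ k, (inner ℝ (hΓ.eigenvectorBasis k) v : ℝ) = (inner ℝ (w k) (E a) : ℝ) := by
      intro k
      rw [PiLp.inner_apply, hwdef]
      simp only [sum_inner, real_inner_smul_left]
      refine Finset.sum_congr rfl fun i _ => ?_
      simp [RCLike.inner_apply, hv, hudef, mul_comm]
    rw [h1, h2]
    refine Finset.sum_congr rfl fun k _ => ?_
    rw [h3 k, real_inner_comm (hΓ.eigenvectorBasis k) v, h3 k, sq]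
  -- Ky Fan: the projection mass is at most the top-r eigenvalue sum
  have kyfan : ∑ k, ∑ a, (inner ℝ (w k) (E a) : ℝ) ^ 2 ≤ ∑ b : Fin r, lam b := by
    set s : Fin n → ℝ := fun k => ∑ a, (inner ℝ (w k) (E a) : ℝ) ^ 2 with hsdef
    have hs0 : ∀ k, 0 ≤ s k := fun k => Finset.sum_nonneg fun a _ => sq_nonneg _
    have hsμ : ∀ k, s k ≤ μ k := by
      intro k
      have h := hE.sum_inner_products_le (𝕜 := ℝ) (w k) (s := Finset.univ)
      have hw2 : ‖w k‖ ^ 2 = μ k := by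
        rw [← real_inner_self_eq_norm_sq, hww k k, if_pos rfl]
      rw [hw2] at h
      refine le_trans (le_of_eq ?_) h
      refine Finset.sum_congr rfl fun a _ => ?_
      rw [real_inner_comm, Real.norm_eq_abs, sq_abs]
    set what : {k : Fin n // 0 < μ k} → H := fun k => (Real.sqrt (μ k))⁻¹ • w k with hwhatdef
    have hwhat : Orthonormal ℝ what := by
      rw [orthonormal_iff_ite]
      rintro ⟨k, hk⟩ ⟨l, hl⟩
      rw [hwhatdef]
      simp only [real_inner_smul_left, real_inner_smul_right]
      rw [hww k l]
      by_cases h : k = l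
      · subst h
        rw [if_pos rfl, if_pos rfl]
        have hs : Real.sqrt (μ k) ≠ 0 := ne_of_gt (Real.sqrt_pos.mpr hk)
        field_simp
        exact (Real.sq_sqrt (hμnn k)).symm
      · simp [Subtype.ext_iff, h]
    have hbessel2 : ∀ a : Fin d, ∑ k' : {k : Fin n // 0 < μ k},
        (μ k')⁻¹ * (inner ℝ (w k') (E a) : ℝ) ^ 2 ≤ 1 := by
      intro a
      have h := hwhat.sum_inner_products_le (𝕜 := ℝ) (E a) (s := Finset.univ)
      have hEa : ‖E a‖ ^ 2 = 1 := by rw [hE.1 a]; norm_num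
      rw [hEa] at h
      refine le_trans (le_of_eq ?_) h
      refine Finset.sum_congr rfl fun k' _ => ?_
      rw [hwhatdef]
      simp only [real_inner_smul_left]
      rw [Real.norm_eq_abs, sq_abs, mul_pow, ← Real.sqrt_inv,
          Real.sq_sqrt (inv_nonneg.mpr (hμnn _)), real_inner_comm]
    set c : Fin n → ℝ := fun k => if 0 < μ k then (μ k)⁻¹ * s k else 0 with hcdef
    have hc0 : ∀ k, 0 ≤ c k := by
      intro k; rw [hcdef]; dsimp only
      split
      · positivity
      · exact le_refl 0
    have hc1 : ∀ k, c k ≤ 1 := by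
      intro k; rw [hcdef]; dsimp only
      split
      · rename_i h
        rw [inv_mul_le_iff₀ h]
        simpa using hsμ k
      · norm_num
    have hμc : ∀ k, μ k * c k = s k := by
      intro k; rw [hcdef]; dsimp only
      split
      · rename_i h
        field_simp
      · rename_i h
        have hμ0 : μ k = 0 := le_antisymm (not_lt.mp h) (hμnn k)
        rw [mul_zero]
        exact (le_antisymm ((hsμ k).trans (le_of_eq hμ0)) (hs0 k)).symm
    have hcsum : ∑ k, c k ≤ (r : ℝ) := by
      have h1 : ∑ k, c k = ∑ k' : {k : Fin n // 0 < μ k}, (μ k')⁻¹ * s k' := by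
        rw [hcdef]
        rw [← Finset.sum_filter]
        exact Finset.sum_subtype _ (by simp) _
      have h2 : ∑ k' : {k : Fin n // 0 < μ k}, (μ k')⁻¹ * s k'
          = ∑ a : Fin d, ∑ k' : {k : Fin n // 0 < μ k},
              (μ k')⁻¹ * (inner ℝ (w k') (E a) : ℝ) ^ 2 := by
        rw [Finset.sum_comm]
        refine Finset.sum_congr rfl fun k' _ => ?_
        rw [hsdef]
        dsimp only
        rw [Finset.mul_sum]
      have h3 : ∑ a : Fin d, ∑ k' : {k : Fin n // 0 < μ k},
          (μ k')⁻¹ * (inner ℝ (w k') (E a) : ℝ) ^ 2 ≤ ∑ a : Fin d, (1:ℝ) :=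
        Finset.sum_le_sum fun a _ => hbessel2 a
      have h4 : ∑ a : Fin d, (1:ℝ) = d := by simp
      calc ∑ k, c k = _ := h1
        _ = _ := h2
        _ ≤ (d : ℝ) := by rw [← h4]; exact h3
        _ ≤ (r : ℝ) := by exact_mod_cast hd
    set τ : Equiv.Perm (Fin n) := (Tuple.sort μ).symm.trans Fin.revPerm with hτdef
    have hlamμ : ∀ i, muD Γ hΓ i = μ (Tuple.sort μ i.rev) := fun i => rfl
    have hlamτ : ∀ k, muD Γ hΓ (τ k) = μ k := by
      intro k
      rw [hlamμ]
      simp [hτdef, Fin.rev_rev]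
    have hanti : Antitone (muD Γ hΓ) := by
      intro i j hij
      rw [hlamμ, hlamμ]
      exact Tuple.monotone_sort μ (Fin.rev_le_rev.mpr hij)
    have hlnn : ∀ k, 0 ≤ muD Γ hΓ k := fun k => by rw [hlamμ]; exact hμnn _
    have key := pca_lemA hr (muD Γ hΓ) (fun k => c (τ.symm k)) hanti hlnn
      (fun k => hc0 _) (fun k => hc1 _)
      (by simpa using le_of_eq_of_le (Equiv.sum_comp τ.symm c) hcsum)
    have hsum1 : ∑ k, s k = ∑ k, muD Γ hΓ k * c (τ.symm k) := by
      rw [← Equiv.sum_comp τ (fun k => muD Γ hΓ k * c (τ.symm k))]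
      refine Finset.sum_congr rfl fun k _ => ?_
      rw [hlamτ, Equiv.symm_apply_apply, hμc]
    calc ∑ k, ∑ a, (inner ℝ (w k) (E a) : ℝ) ^ 2 = ∑ k, s k := rfl
      _ = ∑ k, muD Γ hΓ k * c (τ.symm k) := hsum1
      _ ≤ ∑ b : Fin r, muD Γ hΓ (Fin.castLE hr b) := key
      _ = ∑ b : Fin r, lam b := rfl
  -- combine
  rw [hLHS]
  have := hswap
  linarith [hRHS, kyfan, hswap.ge, hswap.le]
end

section
/- Let (ε_t) be q-dimensional orthonormal white noise and (ξ_t^n) an n-dimensional stationary process orthogonal to (ε_s) at all leads and lags, with sup_n μ_1(Γ_ξ^n) < ∞. Define φ_t^{Jq} = (I_q; …; I_q) ε_t + e_t where e_t has covariance with largest eigenvalue bounded by a constant C uniformly in J. Then the cross-block average (1/J) Σ_{j=1}^J φ_t^{(j)} (averaging the J stacked q-blocks) converges in mean square to ε_t as J → ∞. -/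
open Filter

/-- If φ_t^{(j)} = ε_t + e_t^{(j)} with ε_t orthonormal, e orthogonal to ε, and the top
eigenvalue of the covariance of the stacked errors uniformly bounded by C (expressed via
the quadratic form), then the cross-block average (1/J) Σ_j φ_t^{(j)} converges in mean
square to ε_t as J → ∞. -/
theorem stmt19 {H : Type*} [NormedAddCommGroup H] [InnerProductSpace ℝ H] {q : ℕ}
    (ε : Fin q → H)
    (hON : ∀ a b : Fin q, (inner ℝ (ε a) (ε b) : ℝ) = if a = b then 1 else 0)
    (e : ℕ → Fin q → H)
    (horth : ∀ (j : ℕ) (a b : Fin q), (inner ℝ (ε a) (e j b) : ℝ) = 0)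
    (C : ℝ)
    (hC : ∀ (J : ℕ) (v : Fin J → Fin q → ℝ),
      ‖∑ j : Fin J, ∑ a : Fin q, v j a • e j a‖ ^ 2
        ≤ C * ∑ j : Fin J, ∑ a : Fin q, (v j a) ^ 2) :
    Tendsto
      (fun J : ℕ =>
        ∑ a : Fin q, ‖((J : ℝ)⁻¹ • ∑ j ∈ Finset.range J, (ε a + e j a)) - ε a‖ ^ 2)
      atTop (nhds 0) := by
  have key : ∀ J : ℕ, 1 ≤ J →
      (∑ a : Fin q, ‖((J : ℝ)⁻¹ • ∑ j ∈ Finset.range J, (ε a + e j a)) - ε a‖ ^ 2)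
        ≤ (q * |C|) / J := by
    intro J hJ
    have hJ0 : (J : ℝ) ≠ 0 := Nat.cast_ne_zero.mpr (by omega)
    have hterm : ∀ a : Fin q,
        ‖((J : ℝ)⁻¹ • ∑ j ∈ Finset.range J, (ε a + e j a)) - ε a‖ ^ 2 ≤ |C| / J := by
      intro a
      have hrw : ((J : ℝ)⁻¹ • ∑ j ∈ Finset.range J, (ε a + e j a)) - ε a
          = (J : ℝ)⁻¹ • ∑ j ∈ Finset.range J, e j a := by
        rw [Finset.sum_add_distrib, Finset.sum_const, Finset.card_range, smul_add,
          ← Nat.cast_smul_eq_nsmul ℝ, smul_smul, inv_mul_cancel₀ hJ0, one_smul]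
        abel
      rw [hrw]
      have h := hC J (fun _ b => if b = a then (J : ℝ)⁻¹ else 0)
      have hL : (∑ j : Fin J, ∑ b : Fin q,
          (if b = a then (J : ℝ)⁻¹ else 0) • e j b)
          = (J : ℝ)⁻¹ • ∑ j ∈ Finset.range J, e j a := by
        rw [Finset.smul_sum, ← Fin.sum_univ_eq_sum_range (fun j => (J : ℝ)⁻¹ • e j a)]
        refine Finset.sum_congr rfl fun j _ => ?_
        simp [ite_smul]
      have hR : (C * ∑ j : Fin J, ∑ b : Fin q,
          ((if b = a then (J : ℝ)⁻¹ else 0)) ^ 2) = C / J := by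
        have : (∑ b : Fin q, ((if b = a then (J : ℝ)⁻¹ else 0)) ^ 2)
            = ((J : ℝ)⁻¹) ^ 2 := by
          simp [ite_pow]
        rw [Finset.sum_congr rfl (fun j _ => this), Finset.sum_const]
        simp only [Finset.card_univ, Fintype.card_fin, nsmul_eq_mul]
        field_simp
      rw [hL, hR] at h
      refine h.trans ?_
      gcongr
      exact le_abs_self C
    calc (∑ a : Fin q, ‖((J : ℝ)⁻¹ • ∑ j ∈ Finset.range J, (ε a + e j a)) - ε a‖ ^ 2)
        ≤ ∑ _a : Fin q, |C| / J := Finset.sum_le_sum fun a _ => hterm a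
      _ = (q * |C|) / J := by
          rw [Finset.sum_const]
          simp only [Finset.card_univ, Fintype.card_fin, nsmul_eq_mul]
          ring
  have hpos : ∀ J : ℕ,
      0 ≤ ∑ a : Fin q, ‖((J : ℝ)⁻¹ • ∑ j ∈ Finset.range J, (ε a + e j a)) - ε a‖ ^ 2 :=
    fun J => Finset.sum_nonneg fun a _ => by positivity
  have hbound : Tendsto (fun J : ℕ => (q * |C|) / (J : ℝ)) atTop (nhds 0) :=
    tendsto_const_div_atTop_nhds_zero_nat _
  refine squeeze_zero' (Eventually.of_forall hpos) ?_ hbound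
  filter_upwards [eventually_ge_atTop 1] with J hJ
  exact key J hJ
end
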